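/- arXiv:2001.09854 — 4 statements merged into one kernel-verified Lean document; each statement's English description precedes it below -/
import Mathlib

section
/- Let u(t,x) be a C⁴ solution of u_t + u_x = 0 with u(t,0) = g(t), g four times differentiable. Define the RK stages at the PDE level by u^{(1)} = u^n − Δt ∂_x u^n and u^{(2)} = (3/4)u^n + (1/4)u^{(1)} − (1/4)Δt ∂_x u^{(1)}, where u^n(x) = u(t_n,x). Then ∂_x u^{(2)}(0) = −g'(t_n) − (1/2)Δt g''(t_n) − (1/4)Δt² g'''(t_n). -/
/-! Along the characteristic `s ↦ (t - x + s, s)` the derivative of `u` is `u_t + u_x = 0`, so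
`u (t, x) = u (t - x, 0) = g (t - x)`. Hence `∂ₓ` acts on the stages as `-d/dt` on `g`, and they are
`u⁽¹⁾(x) = g(tₙ - x) + Δt g'(tₙ - x)` and
`u⁽²⁾(x) = g(tₙ - x) + (1/2) Δt g'(tₙ - x) + (1/4) Δt² g''(tₙ - x)`. -/

section Transport

variable {𝕜 F : Type*} [NormedAddCommGroup F]

theorem hasDerivAt_comp_diagonal [NontriviallyNormedField 𝕜] [NormedSpace 𝕜 F]
    {u : 𝕜 × 𝕜 → F} {a s : 𝕜} (hu : DifferentiableAt 𝕜 u (a + s, s)) :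
    HasDerivAt (fun σ => u (a + σ, σ))
      (deriv (fun τ => u (τ, s)) (a + s) + deriv (fun y => u (a + s, y)) s) s := by
  have hL := hu.hasFDerivAt
  have hdiag : HasDerivAt (fun σ => u (a + σ, σ)) (fderiv 𝕜 u (a + s, s) (1, 1)) s :=
    hL.comp_hasDerivAt_of_eq s (((hasDerivAt_id s).const_add a).prodMk (hasDerivAt_id s)) rfl
  have hfst : deriv (fun τ => u (τ, s)) (a + s) = fderiv 𝕜 u (a + s, s) (1, 0) :=
    (hL.comp_hasDerivAt_of_eq (a + s) ((hasDerivAt_id _).prodMk (hasDerivAt_const _ _)) rfl).deriv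
  have hsnd : deriv (fun y => u (a + s, y)) s = fderiv 𝕜 u (a + s, s) (0, 1) :=
    (hL.comp_hasDerivAt_of_eq s ((hasDerivAt_const _ _).prodMk (hasDerivAt_id _)) rfl).deriv
  rw [hfst, hsnd, ← map_add, Prod.mk_add_mk, add_zero, zero_add]
  exact hdiag

theorem transport_eq_boundary [RCLike 𝕜] [NormedSpace 𝕜 F] {u : 𝕜 × 𝕜 → F}
    (hu : Differentiable 𝕜 u)
    (hpde : ∀ t x : 𝕜, deriv (fun s => u (s, x)) t + deriv (fun y => u (t, y)) x = 0)
    (t x : 𝕜) : u (t, x) = u (t - x, 0) := by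
  have hchar : ∀ s, HasDerivAt (fun σ => u (t - x + σ, σ)) 0 s := fun s => by
    simpa only [hpde] using hasDerivAt_comp_diagonal (hu (t - x + s, s))
  have := is_const_of_deriv_eq_zero (fun s => (hchar s).differentiableAt)
    (fun s => (hchar s).deriv) x 0
  simpa only [sub_add_cancel, add_zero] using this

end Transport

theorem stmt3_general (u : ℝ × ℝ → ℝ) (g : ℝ → ℝ) (Δt tn : ℝ)
    (hu : ContDiff ℝ 4 u)
    (hg1 : Differentiable ℝ g)
    (hg2 : Differentiable ℝ (deriv g))
    (hg3 : Differentiable ℝ (deriv (deriv g)))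
    (hpde : ∀ t x : ℝ,
      deriv (fun s => u (s, x)) t + deriv (fun y => u (t, y)) x = 0)
    (hbc : ∀ t : ℝ, u (t, 0) = g t)
    (un u1 u2 : ℝ → ℝ)
    (hun : ∀ x : ℝ, un x = u (tn, x))
    (hu1 : ∀ x : ℝ, u1 x = un x - Δt * deriv un x)
    (hu2 : ∀ x : ℝ, u2 x = (3/4) * un x + (1/4) * u1 x - (1/4) * Δt * deriv u1 x) :
    deriv u2 0 = - deriv g tn - (1/2) * Δt * deriv (deriv g) tn
      - (1/4) * Δt^2 * deriv (deriv (deriv g)) tn := by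
  have hd : ∀ {f : ℝ → ℝ}, Differentiable ℝ f → ∀ x,
      HasDerivAt (fun y => f (tn - y)) (-deriv f (tn - x)) x := fun hf x => (hf (tn - x)).hasDerivAt.comp_const_sub tn x
  have hun' : un = fun x => g (tn - x) := funext fun x => by
    rw [hun, transport_eq_boundary (hu.differentiable (by norm_num)) hpde, hbc]
  have hu1' : u1 = fun x => g (tn - x) + Δt * deriv g (tn - x) := funext fun x => by
    rw [hu1, hun', deriv_comp_const_sub]; ring
  have hdu1 : ∀ x, deriv u1 x = -deriv g (tn - x) - Δt * deriv (deriv g) (tn - x) := fun x => by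
    rw [hu1', ((hd hg1 x).fun_add ((hd hg2 x).const_mul Δt)).deriv]; ring
  have hu2' : u2 = fun x => g (tn - x) + ((1/2) * Δt * deriv g (tn - x)
      + (1/4) * Δt^2 * deriv (deriv g) (tn - x)) := funext fun x => by
    rw [hu2, hdu1, hu1', hun']; ring
  rw [hu2', ((hd hg1 0).fun_add (((hd hg2 0).const_mul _).fun_add ((hd hg3 0).const_mul _))).deriv,
    sub_zero]
  ring

/-- for a C⁴ solution of u_t + u_x = 0 with u(t,0) = g(t) and
RK stages u⁽¹⁾ = uⁿ - Δt ∂ₓuⁿ, u⁽²⁾ = (3/4)uⁿ + (1/4)u⁽¹⁾ - (1/4)Δt ∂ₓu⁽¹⁾,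
one has ∂ₓ u⁽²⁾(0) = -g'(tₙ) - (1/2)Δt g''(tₙ) - (1/4)Δt² g'''(tₙ). -/
theorem stmt3 (u : ℝ × ℝ → ℝ) (g : ℝ → ℝ) (Δt tn : ℝ)
    (hu : ContDiff ℝ 4 u)
    (hg1 : Differentiable ℝ g)
    (hg2 : Differentiable ℝ (deriv g))
    (hg3 : Differentiable ℝ (deriv (deriv g)))
    (hg4 : Differentiable ℝ (deriv (deriv (deriv g))))
    (hΔt : 0 < Δt)
    (hpde : ∀ t x : ℝ,
      deriv (fun s => u (s, x)) t + deriv (fun y => u (t, y)) x = 0)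
    (hbc : ∀ t : ℝ, u (t, 0) = g t)
    (un u1 u2 : ℝ → ℝ)
    (hun : ∀ x : ℝ, un x = u (tn, x))
    (hu1 : ∀ x : ℝ, u1 x = un x - Δt * deriv un x)
    (hu2 : ∀ x : ℝ, u2 x = (3/4) * un x + (1/4) * u1 x - (1/4) * Δt * deriv u1 x) :
    deriv u2 0 = - deriv g tn - (1/2) * Δt * deriv (deriv g) tn
      - (1/4) * Δt^2 * deriv (deriv (deriv g)) tn :=
  stmt3_general u g Δt tn hu hg1 hg2 hg3 hpde hbc un u1 u2 hun hu1 hu2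
end

section
/- Let f, g : ℝ → ℝ be smooth with f'(g(t)) ≠ 0. Define A(Δt) = −(g'(t) + Δt g''(t))/f'(g(t) + Δt g'(t)) (the intermediate-boundary-condition ILW value of u_x^{(1)}) and B(Δt) = −[g'(t)f'(g(t)) + Δt g''(t)f'(g(t)) − Δt (g'(t))² f''(g(t))]/(f'(g(t)))² (the RK-based boundary-treatment value of u_x^{(1)}). Then A(0) = B(0), A'(0) = B'(0), and A''(0) − B''(0) = [2 f'(g(t)) f''(g(t)) g'(t) g''(t) + (g'(t))³(−2(f''(g(t)))² + f'(g(t)) f'''(g(t)))]/(f'(g(t)))³; in particular A(Δt) − B(Δt) = O(Δt²) as Δt → 0, and the two values differ at order Δt² unless the stated third-derivative coefficient vanishes. -/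
/-!
Writing `a = g'(t)`, `b = g''(t)`, `c = g(t)`, the ILW value is the quotient
`A(s) = -(a + s b) / f'(c + s a)`, which is twice differentiable at `0` since `f'` is `C²` and
`f'(c) ≠ 0`. The RK value `B` is exactly the first-order Taylor polynomial `A(0) + s A'(0)` of `A`,
so `A - B = O(s²)` by the mean value theorem, `B'' = 0`, and the remaining identity is the
quotient rule applied twice at `s = 0`.
-/

open Asymptotics Filter Topology

theorem hasDerivAt_comp_add_mul {k : ℝ → ℝ} {c a s : ℝ} (hk : DifferentiableAt ℝ k (c + s * a)) :
    HasDerivAt (fun s => k (c + s * a)) (deriv k (c + s * a) * a) s :=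
  hk.hasDerivAt.comp s (((hasDerivAt_id s).mul_const a).const_add c |>.congr_deriv (one_mul a))

theorem hasDerivAt_deriv_div {u v u' v' : ℝ → ℝ} {u'' v'' x : ℝ}
    (hu : ∀ᶠ y in 𝓝 x, HasDerivAt u (u' y) y) (hv : ∀ᶠ y in 𝓝 x, HasDerivAt v (v' y) y)
    (hu' : HasDerivAt u' u'' x) (hv' : HasDerivAt v' v'' x) (hx : v x ≠ 0) :
    HasDerivAt (deriv fun y => u y / v y)
      (((u'' * v x - u x * v'') * v x - 2 * v' x * (u' x * v x - u x * v' x)) / v x ^ 3) x := by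
  have hux := hu.self_of_nhds
  have hvx := hv.self_of_nhds
  have hderiv : (deriv fun y => u y / v y) =ᶠ[𝓝 x]
      fun y => (u' y * v y - u y * v' y) / v y ^ 2 := by
    filter_upwards [hu, hv, hvx.continuousAt.eventually_ne hx] with y huy hvy hy
    exact (huy.div hvy hy).deriv
  refine ((((hu'.mul hvx).sub (hux.mul hv')).div (hvx.pow 2) (pow_ne_zero 2 hx)
    ).congr_of_eventuallyEq hderiv).congr_deriv ?_
  simp only [Pi.mul_apply, Pi.sub_apply, Pi.pow_apply]
  field_simp
  ring

theorem hasDerivAt_neg_add_mul (a b s : ℝ) : HasDerivAt (fun s => -(a + s * b)) (-b) s :=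
  (((hasDerivAt_id s).mul_const b).const_add a).neg.congr_deriv (by simp)

section NegAffineDivComp

variable {k : ℝ → ℝ} {a b c : ℝ}

theorem eventually_differentiableAt_neg_affine_div_comp (hk : Differentiable ℝ k) (hc : k c ≠ 0) :
    ∀ᶠ s in 𝓝 0, DifferentiableAt ℝ (fun s => -(a + s * b) / k (c + s * a)) s := by
  have hden (s : ℝ) := hasDerivAt_comp_add_mul (c := c) (a := a) (hk (c + s * a))
  filter_upwards [(hden 0).continuousAt.eventually_ne (by simpa using hc)] with s hs
  exact ((hasDerivAt_neg_add_mul a b s).fun_div (hden s) hs).differentiableAt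

theorem hasDerivAt_neg_affine_div_comp (hk : DifferentiableAt ℝ k c) (hc : k c ≠ 0) :
    HasDerivAt (fun s => -(a + s * b) / k (c + s * a))
      (-(b * k c - a ^ 2 * deriv k c) / k c ^ 2) 0 := by
  have hden := hasDerivAt_comp_add_mul (s := 0) (a := a) (by simpa using hk)
  refine ((hasDerivAt_neg_add_mul a b 0).fun_div hden (by simpa using hc)).congr_deriv ?_
  simp only [zero_mul, add_zero]
  ring

theorem hasDerivAt_deriv_neg_affine_div_comp (hk : ContDiff ℝ 2 k) (hc : k c ≠ 0) :
    HasDerivAt (deriv fun s => -(a + s * b) / k (c + s * a))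
      ((2 * k c * deriv k c * a * b + a ^ 3 * (-2 * deriv k c ^ 2 + k c * deriv (deriv k) c))
        / k c ^ 3) 0 := by
  have hden (s : ℝ) := hasDerivAt_comp_add_mul (c := c) (a := a)
    (hk.differentiable two_ne_zero (c + s * a))
  have hden' : HasDerivAt (fun s => deriv k (c + s * a) * a) (deriv (deriv k) c * a * a) 0 := by
    simpa using (hasDerivAt_comp_add_mul (s := 0)
      ((hk.deriv' (n := 1)).differentiable one_ne_zero _)).mul_const a
  refine (hasDerivAt_deriv_div (.of_forall (hasDerivAt_neg_add_mul a b)) (.of_forall hden)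
    (hasDerivAt_const 0 _) hden' (by simpa using hc)).congr_deriv ?_
  simp only [zero_mul, add_zero, neg_mul, sub_neg_eq_add, zero_add]
  field_simp
  ring

end NegAffineDivComp

theorem isBigO_sub_sq_of_deriv_eq_zero {h : ℝ → ℝ} {x₀ : ℝ}
    (hd : ∀ᶠ x in 𝓝 x₀, DifferentiableAt ℝ h x) (hd₂ : DifferentiableAt ℝ (deriv h) x₀)
    (h₀ : h x₀ = 0) (h₁ : deriv h x₀ = 0) :
    h =O[𝓝 x₀] fun x => (x - x₀) ^ 2 := by
  have hderiv : fderiv ℝ h =O[𝓝 x₀] (‖· - x₀‖ ^ (1 : ℝ)) := by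
    rw [← isBigO_norm_left]
    simp only [← norm_deriv_eq_norm_fderiv, Real.rpow_one]
    simpa [h₁] using hd₂.isBigO_sub.norm_norm
  refine (isBigO_norm_rpow_add_one_of_fderiv_of_apply_eq_zero zero_le_one hd hderiv h₀).trans
    (isBigO_of_le _ fun x => le_of_eq ?_)
  rw [one_add_one_eq_two, Real.rpow_two, norm_pow, norm_norm, norm_pow]

theorem hasDerivAt_add_sub_mul (y₀ m x₀ x : ℝ) :
    HasDerivAt (fun x => y₀ + (x - x₀) * m) m x :=
  (((hasDerivAt_id x).sub_const x₀).mul_const m).const_add y₀ |>.congr_deriv (one_mul m)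

theorem isBigO_sub_taylor_one {h : ℝ → ℝ} {x₀ : ℝ}
    (hd : ∀ᶠ x in 𝓝 x₀, DifferentiableAt ℝ h x) (hd₂ : DifferentiableAt ℝ (deriv h) x₀) :
    (fun x => h x - (h x₀ + (x - x₀) * deriv h x₀)) =O[𝓝 x₀] fun x => (x - x₀) ^ 2 := by
  have hlin := hasDerivAt_add_sub_mul (h x₀) (deriv h x₀) x₀
  have hderiv : deriv (fun x => h x - (h x₀ + (x - x₀) * deriv h x₀)) =ᶠ[𝓝 x₀]
      fun x => deriv h x - deriv h x₀ := by
    filter_upwards [hd] with x hx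
    exact (hx.hasDerivAt.sub (hlin x)).deriv
  apply isBigO_sub_sq_of_deriv_eq_zero
  · filter_upwards [hd] with x hx
    exact hx.sub (hlin x).differentiableAt
  · exact (hd₂.sub_const _).congr_of_eventuallyEq hderiv
  · simp
  · simp [hderiv.eq_of_nhds]

theorem stmt4_general (f g : ℝ → ℝ) (t : ℝ)
    (hf : ContDiff ℝ 3 f)
    (hfp : deriv f (g t) ≠ 0)
    (A B : ℝ → ℝ)
    (hA : ∀ Δt : ℝ, A Δt =
      -(deriv g t + Δt * deriv (deriv g) t) / deriv f (g t + Δt * deriv g t))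
    (hB : ∀ Δt : ℝ, B Δt =
      -(deriv g t * deriv f (g t) + Δt * deriv (deriv g) t * deriv f (g t)
        - Δt * (deriv g t)^2 * deriv (deriv f) (g t)) / (deriv f (g t))^2) :
    A 0 = B 0 ∧ deriv A 0 = deriv B 0 ∧
    deriv (deriv A) 0 - deriv (deriv B) 0 =
      (2 * deriv f (g t) * deriv (deriv f) (g t) * deriv g t * deriv (deriv g) t
        + (deriv g t)^3 * (-2 * (deriv (deriv f) (g t))^2
            + deriv f (g t) * deriv (deriv (deriv f)) (g t)))
        / (deriv f (g t))^3 ∧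
    (fun Δt => A Δt - B Δt) =O[nhds 0] (fun Δt => Δt^2) := by
  set a := deriv g t
  set b := deriv (deriv g) t
  set c := g t
  have hf₁ : ContDiff ℝ 2 (deriv f) := hf.deriv'
  have hA_eq : A = fun s => -(a + s * b) / deriv f (c + s * a) := funext hA
  have hA₁ : HasDerivAt A _ 0 :=
    hA_eq ▸ hasDerivAt_neg_affine_div_comp (hf₁.differentiable two_ne_zero c) hfp
  have hA₂ : HasDerivAt (deriv A) _ 0 := hA_eq ▸ hasDerivAt_deriv_neg_affine_div_comp hf₁ hfp
  have hB_taylor : B = fun s => A 0 + (s - 0) * deriv A 0 := by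
    funext s
    rw [hB, hA, hA₁.deriv, zero_mul, add_zero, zero_mul, add_zero]
    field_simp
    ring
  have hB_deriv : deriv B = fun _ => deriv A 0 := by
    rw [hB_taylor]
    exact funext fun s => (hasDerivAt_add_sub_mul _ _ _ s).deriv
  refine ⟨by simp [hB_taylor], by simp [hB_deriv], by simp [hA₂.deriv, hB_deriv], ?_⟩
  have hdA : ∀ᶠ s in 𝓝 0, DifferentiableAt ℝ A s :=
    hA_eq ▸ eventually_differentiableAt_neg_affine_div_comp (hf₁.differentiable two_ne_zero) hfp
  rw [hB_taylor]
  simpa using isBigO_sub_taylor_one hdA hA₂.differentiableAt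

/-- comparison of the intermediate-boundary-condition ILW value
A(Δt) and the RK-based value B(Δt) of u_x⁽¹⁾: A and B agree to first order in
Δt, and their second derivatives at 0 differ by the displayed expression; in
particular A - B = O(Δt²). -/
theorem stmt4 (f g : ℝ → ℝ) (t : ℝ)
    (hf : ContDiff ℝ 3 f)
    (hg : ContDiff ℝ 2 g)
    (hfp : deriv f (g t) ≠ 0)
    (A B : ℝ → ℝ)
    (hA : ∀ Δt : ℝ, A Δt =
      -(deriv g t + Δt * deriv (deriv g) t) / deriv f (g t + Δt * deriv g t))
    (hB : ∀ Δt : ℝ, B Δt =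
      -(deriv g t * deriv f (g t) + Δt * deriv (deriv g) t * deriv f (g t)
        - Δt * (deriv g t)^2 * deriv (deriv f) (g t)) / (deriv f (g t))^2) :
    A 0 = B 0 ∧ deriv A 0 = deriv B 0 ∧
    deriv (deriv A) 0 - deriv (deriv B) 0 =
      (2 * deriv f (g t) * deriv (deriv f) (g t) * deriv g t * deriv (deriv g) t
        + (deriv g t)^3 * (-2 * (deriv (deriv f) (g t))^2
            + deriv f (g t) * deriv (deriv (deriv f)) (g t)))
        / (deriv f (g t))^3 ∧
    (fun Δt => A Δt - B Δt) =O[nhds 0] (fun Δt => Δt^2) :=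
  stmt4_general f g t hf hfp A B hA hB
end

section
/- Strong stability of convex-combination Runge-Kutta schemes: let ‖·‖ be a norm (or convex functional) on a vector space V and L, L̃ : V → V maps such that ‖v + Δt L(v)‖ ≤ ‖v‖ and ‖v − Δt L̃(v)‖ ≤ ‖v‖ for all v ∈ V and all 0 < Δt ≤ Δt_FE. Consider an s-stage Runge-Kutta scheme U^{(i)} = Σ_{k<i} [α_{ik}U^{(k)} + Δt β_{ik} L_{ik}(U^{(k)})] where α_{ik} ≥ 0, Σ_k α_{ik} = 1, α_{ik} = 0 implies β_{ik} = 0, and L_{ik} = L if β_{ik} > 0, L_{ik} = L̃ if β_{ik} < 0. If Δt ≤ c·Δt_FE with c = min over (i,k) with β_{ik} ≠ 0 of α_{ik}/|β_{ik}|, then ‖U^{(i)}‖ ≤ ‖U^{(0)}‖ for every stage i, and in particular ‖U^{n+1}‖ = ‖U^{(s)}‖ ≤ ‖U^n‖. -/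
lemma seminorm_sum_le {V : Type*} [AddCommGroup V] [Module ℝ V] (N : Seminorm ℝ V)
    {ι : Type*} (t : Finset ι) (f : ι → V) :
    N (∑ i ∈ t, f i) ≤ ∑ i ∈ t, N (f i) := by
  classical
  induction t using Finset.cons_induction with
  | empty => simp
  | cons a t ha ih =>
    rw [Finset.sum_cons, Finset.sum_cons]
    exact le_trans (map_add_le_add N _ _) (by gcongr)

/-- strong stability of convex-combination Runge-Kutta schemes.
If forward Euler with L (resp. backward-in-time Euler with L̃) is strongly
stable for step sizes up to Δt_FE, the coefficients αᵢₖ are nonnegative with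
row sums 1 and αᵢₖ = 0 → βᵢₖ = 0, and Δt·|βᵢₖ| ≤ αᵢₖ·Δt_FE whenever βᵢₖ ≠ 0
(i.e. Δt ≤ c·Δt_FE with c = min αᵢₖ/|βᵢₖ|), then every stage satisfies
‖U⁽ⁱ⁾‖ ≤ ‖U⁽⁰⁾‖; in particular ‖Uⁿ⁺¹‖ = ‖U⁽ˢ⁾‖ ≤ ‖Uⁿ‖. -/
theorem stmt9 {V : Type*} [AddCommGroup V] [Module ℝ V]
    (N : Seminorm ℝ V) (L Lt : V → V) (ΔtFE : ℝ) (hΔtFE : 0 < ΔtFE)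
    (hL : ∀ v : V, ∀ τ : ℝ, 0 < τ → τ ≤ ΔtFE → N (v + τ • L v) ≤ N v)
    (hLt : ∀ v : V, ∀ τ : ℝ, 0 < τ → τ ≤ ΔtFE → N (v - τ • Lt v) ≤ N v)
    (s : ℕ) (α β : ℕ → ℕ → ℝ)
    (hα : ∀ i k, 1 ≤ i → i ≤ s → k < i → 0 ≤ α i k)
    (hsum : ∀ i, 1 ≤ i → i ≤ s → ∑ k ∈ Finset.range i, α i k = 1)
    (hαβ : ∀ i k, 1 ≤ i → i ≤ s → k < i → α i k = 0 → β i k = 0)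
    (Δt : ℝ) (hΔt : 0 < Δt)
    (hcfl : ∀ i k, 1 ≤ i → i ≤ s → k < i → β i k ≠ 0 →
      Δt * |β i k| ≤ α i k * ΔtFE)
    (U : ℕ → V)
    (hU : ∀ i, 1 ≤ i → i ≤ s →
      U i = ∑ k ∈ Finset.range i,
        (α i k • U k + (Δt * β i k) • (if 0 < β i k then L (U k) else Lt (U k)))) :
    ∀ i, i ≤ s → N (U i) ≤ N (U 0) := by
  intro i
  induction i using Nat.strong_induction_on with
  | _ i ih =>
    intro his
    rcases Nat.eq_zero_or_pos i with rfl | hi1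
    · exact le_refl _
    rw [hU i hi1 his]
    have key : ∀ k ∈ Finset.range i,
        N (α i k • U k + (Δt * β i k) • (if 0 < β i k then L (U k) else Lt (U k)))
          ≤ α i k * N (U 0) := by
      intro k hk
      rw [Finset.mem_range] at hk
      have hαk := hα i k hi1 his hk
      have hstage : N (U k) ≤ N (U 0) := ih k hk (le_trans (le_of_lt hk) his)
      by_cases hβ : β i k = 0
      · simp only [hβ, mul_zero, zero_smul, add_zero, map_smul_eq_mul]
        calc |α i k| * N (U k) ≤ |α i k| * N (U 0) :=
              mul_le_mul_of_nonneg_left hstage (abs_nonneg _)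
          _ = α i k * N (U 0) := by rw [abs_of_nonneg hαk]
      · have hαpos : 0 < α i k := by
          rcases lt_or_eq_of_le hαk with h | h
          · exact h
          · exact absurd (hαβ i k hi1 his hk h.symm) hβ
        set τ := Δt * |β i k| / α i k with hτdef
        have hτpos : 0 < τ :=
          div_pos (mul_pos hΔt (abs_pos.mpr hβ)) hαpos
        have hτle : τ ≤ ΔtFE := by
          rw [div_le_iff₀ hαpos]
          calc Δt * |β i k| ≤ α i k * ΔtFE := hcfl i k hi1 his hk hβ
            _ = ΔtFE * α i k := mul_comm _ _
        have hbound : N (U k + (if 0 < β i k then τ • L (U k) else - (τ • Lt (U k))))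
            ≤ N (U 0) := by
          by_cases hb : 0 < β i k
          · simp only [hb, if_true]
            exact le_trans (hL (U k) τ hτpos hτle) hstage
          · simp only [hb, if_false, ← sub_eq_add_neg]
            exact le_trans (hLt (U k) τ hτpos hτle) hstage
        have heq : α i k • U k + (Δt * β i k) • (if 0 < β i k then L (U k) else Lt (U k))
            = α i k • (U k + (if 0 < β i k then τ • L (U k) else - (τ • Lt (U k)))) := by
          by_cases hb : 0 < β i k
          · simp only [hb, if_true, smul_add, smul_smul]
            congr 2
            rw [hτdef, abs_of_pos hb]
            field_simp
          · have hblt : β i k < 0 := lt_of_le_of_ne (not_lt.mp hb) hβ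
            have hmul : α i k * τ = -(Δt * β i k) := by
              rw [hτdef, abs_of_neg hblt]
              field_simp
            simp only [hb, if_false, smul_add, smul_smul, hmul, neg_smul, smul_neg, neg_neg]
        rw [heq, map_smul_eq_mul, Real.norm_eq_abs, abs_of_pos hαpos]
        exact mul_le_mul_of_nonneg_left hbound (le_of_lt hαpos)
    calc N (∑ k ∈ Finset.range i,
          (α i k • U k + (Δt * β i k) • (if 0 < β i k then L (U k) else Lt (U k))))
        ≤ ∑ k ∈ Finset.range i, N (α i k • U k +
            (Δt * β i k) • (if 0 < β i k then L (U k) else Lt (U k))) :=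
          seminorm_sum_le N _ _
      _ ≤ ∑ k ∈ Finset.range i, α i k * N (U 0) := Finset.sum_le_sum key
      _ = (∑ k ∈ Finset.range i, α i k) * N (U 0) := (Finset.sum_mul ..).symm
      _ = N (U 0) := by rw [hsum i hi1 his, one_mul]
end

section
/- Strong stability of the three-stage third-order SSP Runge-Kutta scheme: if ‖v + Δt L(v)‖ ≤ ‖v‖ for all v and all Δt ≤ Δt_FE, then the scheme u^{(1)} = u + Δt L(u), u^{(2)} = (3/4)u + (1/4)u^{(1)} + (1/4)Δt L(u^{(1)}), u^{new} = (1/3)u + (2/3)u^{(2)} + (2/3)Δt L(u^{(2)}) satisfies ‖u^{new}‖ ≤ ‖u‖ for all Δt ≤ Δt_FE. -/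
/-- strong stability of the three-stage third-order SSP
Runge-Kutta scheme. -/
theorem stmt10 {V : Type*} [AddCommGroup V] [Module ℝ V]
    (N : Seminorm ℝ V) (L : V → V) (ΔtFE : ℝ) (hΔtFE : 0 < ΔtFE)
    (hL : ∀ v : V, ∀ τ : ℝ, 0 < τ → τ ≤ ΔtFE → N (v + τ • L v) ≤ N v)
    (u : V) (Δt : ℝ) (hΔt : 0 < Δt) (hΔt' : Δt ≤ ΔtFE)
    (u1 u2 unew : V)
    (hu1 : u1 = u + Δt • L u)
    (hu2 : u2 = (3/4 : ℝ) • u + (1/4 : ℝ) • u1 + ((1/4 : ℝ) * Δt) • L u1)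
    (hunew : unew = (1/3 : ℝ) • u + (2/3 : ℝ) • u2 + ((2/3 : ℝ) * Δt) • L u2) :
    N unew ≤ N u := by
  have h1 : N u1 ≤ N u := by rw [hu1]; exact hL u Δt hΔt hΔt'
  have e2 : u2 = (3/4 : ℝ) • u + (1/4 : ℝ) • (u1 + Δt • L u1) := by
    rw [hu2]; module
  have hfe1 : N (u1 + Δt • L u1) ≤ N u1 := hL u1 Δt hΔt hΔt'
  have h2 : N u2 ≤ N u := by
    rw [e2]
    calc N ((3/4 : ℝ) • u + (1/4 : ℝ) • (u1 + Δt • L u1))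
        ≤ N ((3/4 : ℝ) • u) + N ((1/4 : ℝ) • (u1 + Δt • L u1)) := map_add_le_add N _ _
      _ = (3/4 : ℝ) * N u + (1/4 : ℝ) * N (u1 + Δt • L u1) := by
          rw [map_smul_eq_mul, map_smul_eq_mul]; norm_num
      _ ≤ N u := by nlinarith
  have e3 : unew = (1/3 : ℝ) • u + (2/3 : ℝ) • (u2 + Δt • L u2) := by
    rw [hunew]; module
  have hfe2 : N (u2 + Δt • L u2) ≤ N u2 := hL u2 Δt hΔt hΔt'
  calc N unew = N ((1/3 : ℝ) • u + (2/3 : ℝ) • (u2 + Δt • L u2)) := by rw [e3]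
    _ ≤ N ((1/3 : ℝ) • u) + N ((2/3 : ℝ) • (u2 + Δt • L u2)) := map_add_le_add N _ _
    _ = (1/3 : ℝ) * N u + (2/3 : ℝ) * N (u2 + Δt • L u2) := by
        rw [map_smul_eq_mul, map_smul_eq_mul]; norm_num
    _ ≤ N u := by nlinarith
end
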